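/- arXiv:2202.07904 — 2 statements merged into one kernel-verified Lean document; each statement's English description precedes it below -/
import Mathlib

section
/- Let $A$, $F$, $U$ be independent random variables where $A = \sum_{i=1}^{n}(\mathsf{Geom}_i(1-\beta)-1)$, $F = 1 + \sum_{i=1}^{n-1}\mathsf{Be}_i(1-d)$, and $U = \mathsf{Geom}(1-d)-1$. If $\frac{\beta}{1-\beta} < \eta(1-d)$ for some $\eta \in (0,1]$, then there exists a constant $c > 0$ (independent of $n$) such that $P(A \geq \eta F - U) \leq e^{-cn}$ for all $n \geq 1$. -/
/-!
Chernoff bound: for `t > 0`, independence factors `E[exp (t (A - η F + U))]` into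
`exp (-t η) · g(t)^n · b(t)^(n-1) · u(t)`, the moment generating functions of the summands.
At `t = 0` the product `g b` equals `1` and its derivative is `β / (1 - β) - η (1 - d) < 0`,
so `g(t) b(t) < 1` for small `t > 0` and the bound decays geometrically in `n`. The constant in
front may exceed `1`, so for the finitely many small `n` one uses instead that the event fails
when all the geometric variables behind `A` equal `1` and `U = 0`, which has positive probability.
-/

open MeasureTheory ProbabilityTheory Real

open Filter Topology

open scoped ENNReal

/-- The moment generating function of the number of failures before the first success, when each
trial fails with probability `q`. -/
noncomputable def geometricMgf (q t : ℝ) : ℝ := (1 - q) / (1 - q * exp t)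

/-- The moment generating function of a Bernoulli variable with success probability `1 - q`. -/
noncomputable def bernoulliMgf (q t : ℝ) : ℝ := q + (1 - q) * exp t

theorem geometricMgf_pos {q t : ℝ} (hq : q < 1) (hqt : q * exp t < 1) : 0 < geometricMgf q t :=
  div_pos (by linarith) (by linarith)

theorem bernoulliMgf_pos {q : ℝ} (hq0 : 0 ≤ q) (hq1 : q < 1) (t : ℝ) : 0 < bernoulliMgf q t :=
  add_pos_of_nonneg_of_pos hq0 (mul_pos (by linarith) (exp_pos t))

theorem HasDerivAt.eventually_lt_of_neg {f : ℝ → ℝ} {f' x : ℝ} (hf : HasDerivAt f f' x)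
    (hf' : f' < 0) : ∀ᶠ t in 𝓝[>] x, f t < f x := by
  filter_upwards [nhdsGT_le_nhdsNE x ((hasDerivAt_iff_tendsto_slope.mp hf).eventually
    (eventually_lt_nhds hf')), self_mem_nhdsWithin] with t hslope (ht : x < t)
  rw [slope_def_field, div_neg_iff] at hslope
  rcases hslope with ⟨-, h⟩ | ⟨h, -⟩ <;> linarith

theorem eventually_geometricMgf_mul_bernoulliMgf_lt_one {β q η : ℝ} (hβ1 : β < 1)
    (h : β / (1 - β) < η * (1 - q)) :
    ∀ᶠ t in 𝓝[>] 0, geometricMgf β t * bernoulliMgf q (-η * t) < 1 := by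
  have h1β : 1 - β ≠ 0 := by linarith
  have hg : HasDerivAt (geometricMgf β) (β / (1 - β)) 0 := by
    refine ((hasDerivAt_const (0 : ℝ) (1 - β)).div
      (((hasDerivAt_exp 0).const_mul β).const_sub 1) (by simpa using h1β)).congr_deriv ?_
    rw [exp_zero, mul_one]
    field_simp
    ring
  have hb : HasDerivAt (fun t => bernoulliMgf q (-η * t)) (-(η * (1 - q))) 0 := by
    refine ((((hasDerivAt_id (0 : ℝ)).const_mul (-η)).exp.const_mul (1 - q)).const_add
      q).congr_deriv ?_
    simp [mul_comm]
  have := (hg.mul hb).eventually_lt_of_neg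
    (by simpa [geometricMgf, bernoulliMgf, h1β] using h)
  simpa [geometricMgf, bernoulliMgf, h1β] using this

theorem exists_pos_eventually_mul_pow_le_exp {C r : ℝ} (hr0 : 0 < r) (hr1 : r < 1) :
    ∃ c : ℝ, 0 < c ∧ ∀ᶠ n : ℕ in atTop, C * r ^ n ≤ exp (-c * n) := by
  set c := -log r / 2
  have hc : 0 < c := by have := log_neg hr0 hr1; simp only [c]; linarith
  refine ⟨c, hc, ?_⟩
  have hlim : Tendsto (fun n : ℕ => C * exp (-c * n)) atTop (𝓝 0) := by
    simpa using (tendsto_exp_neg_atTop_nhds_zero.comp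
      (tendsto_natCast_atTop_atTop.const_mul_atTop hc)).const_mul C
  filter_upwards [hlim.eventually (eventually_le_nhds one_pos)] with n hn
  have hr : r ^ n = exp (-c * n) * exp (-c * n) := by
    rw [← exp_add, ← exp_log (pow_pos hr0 n), log_pow]; congr 1; simp only [c]; ring
  calc C * r ^ n = C * exp (-c * n) * exp (-c * n) := by rw [hr, mul_assoc]
    _ ≤ 1 * exp (-c * n) := by gcongr
    _ = exp (-c * n) := one_mul _

theorem exists_pos_forall_le_ofReal_exp_of_eventually {p : ℕ → ℝ≥0∞} {c₀ : ℝ} (hc₀ : 0 < c₀)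
    (hlt : ∀ n, 1 ≤ n → p n < 1) (hev : ∀ᶠ n in atTop, p n ≤ ENNReal.ofReal (exp (-c₀ * n))) :
    ∃ c : ℝ, 0 < c ∧ ∀ n : ℕ, 1 ≤ n → p n ≤ ENNReal.ofReal (exp (-c * n)) := by
  obtain ⟨N, hN⟩ := eventually_atTop.1 hev
  have hsmall : ∀ᶠ c in 𝓝[>] (0 : ℝ), ∀ n ∈ Finset.Ico 1 N,
      p n ≤ ENNReal.ofReal (exp (-c * n)) := by
    rw [eventually_all_finset]
    intro n hn
    have hlim : Tendsto (fun c : ℝ => ENNReal.ofReal (exp (-c * n))) (𝓝[>] 0) (𝓝 1) := by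
      have : Continuous fun c : ℝ => ENNReal.ofReal (exp (-c * n)) :=
        ENNReal.continuous_ofReal.comp (by fun_prop)
      simpa using (this.tendsto 0).mono_left nhdsWithin_le_nhds
    exact hlim.eventually (eventually_ge_nhds (hlt n (Finset.mem_Ico.1 hn).1))
  have hIoo : ∀ᶠ c in 𝓝[>] (0 : ℝ), c ∈ Set.Ioo 0 c₀ := Ioo_mem_nhdsGT hc₀
  obtain ⟨c, ⟨hc, hcc₀⟩, hcN⟩ := (hIoo.and hsmall).exists
  refine ⟨c, hc, fun n hn => ?_⟩
  rcases lt_or_ge n N with h | h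
  · exact hcN n (Finset.mem_Ico.2 ⟨hn, h⟩)
  · refine (hN n h).trans (ENNReal.ofReal_le_ofReal (exp_le_exp.2 ?_))
    have : (0 : ℝ) ≤ n := n.cast_nonneg
    nlinarith

theorem exists_pos_forall_le_ofReal_exp {p : ℕ → ℝ≥0∞} {C r : ℝ} (hr0 : 0 < r) (hr1 : r < 1)
    (hlt : ∀ n, 1 ≤ n → p n < 1) (hle : ∀ n, 1 ≤ n → p n ≤ ENNReal.ofReal (C * r ^ n)) :
    ∃ c : ℝ, 0 < c ∧ ∀ n : ℕ, 1 ≤ n → p n ≤ ENNReal.ofReal (exp (-c * n)) := by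
  obtain ⟨c₀, hc₀, hev⟩ := exists_pos_eventually_mul_pow_le_exp (C := C) hr0 hr1
  refine exists_pos_forall_le_ofReal_exp_of_eventually hc₀ hlt ?_
  filter_upwards [hev, eventually_ge_atTop 1] with n hn hn1
  exact (hle n hn1).trans (ENNReal.ofReal_le_ofReal hn)

section Distribution

variable {Ω : Type*} [MeasurableSpace Ω] {μ : Measure Ω}

theorem lintegral_comp_eq_tsum {α : Type*} [Countable α] [MeasurableSpace α]
    [MeasurableSingletonClass α] {X : Ω → α} (hX : Measurable X) (f : α → ℝ≥0∞) :
    ∫⁻ ω, f (X ω) ∂μ = ∑' a, f a * μ {ω | X ω = a} := by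
  rw [← lintegral_map (measurable_of_countable f) hX, lintegral_countable']
  refine tsum_congr fun a => ?_
  rw [Measure.map_apply hX (measurableSet_singleton a)]
  rfl

theorem measure_eq_of_measure_ge {X : Ω → ℕ} (hX : Measurable X) {k : ℕ} {a b : ℝ}
    (hb : 0 ≤ b) (hk : μ {ω | k ≤ X ω} = ENNReal.ofReal a)
    (hk' : μ {ω | k + 1 ≤ X ω} = ENNReal.ofReal b) :
    μ {ω | X ω = k} = ENNReal.ofReal (a - b) := by
  have hdiff : {ω | X ω = k} = {ω | k ≤ X ω} \ {ω | k + 1 ≤ X ω} := by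
    ext ω; simp only [Set.mem_ofPred_eq, Set.mem_sdiff]; omega
  have hsub : {ω | k + 1 ≤ X ω} ⊆ {ω | k ≤ X ω} := fun ω (h : k + 1 ≤ X ω) => by
    simp only [Set.mem_ofPred_eq]; omega
  rw [hdiff, measure_sdiff hsub (hX measurableSet_Ici).nullMeasurableSet
    (by rw [hk']; exact ENNReal.ofReal_ne_top), hk, hk', ENNReal.ofReal_sub _ hb]

theorem lintegral_exp_mul_of_measure_ge_eq_pow {X : Ω → ℕ} (hX : Measurable X) {q t : ℝ}
    (hq0 : 0 ≤ q) (hq1 : q ≤ 1) (hqt : q * exp t < 1)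
    (htail : ∀ k : ℕ, μ {ω | k ≤ X ω} = ENNReal.ofReal (q ^ k)) :
    ∫⁻ ω, ENNReal.ofReal (exp (t * X ω)) ∂μ = ENNReal.ofReal (geometricMgf q t) := by
  have hterm : ∀ k : ℕ, ENNReal.ofReal (exp (t * k)) * μ {ω | X ω = k}
      = ENNReal.ofReal (1 - q) * ENNReal.ofReal (q * exp t) ^ k := by
    intro k
    rw [measure_eq_of_measure_ge hX (by positivity) (htail k) (htail (k + 1)),
      ← ENNReal.ofReal_mul (exp_pos _).le, ← ENNReal.ofReal_pow (by positivity),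
      ← ENNReal.ofReal_mul (by linarith)]
    congr 1
    rw [mul_pow, ← exp_nat_mul]
    ring_nf
  rw [lintegral_comp_eq_tsum hX (fun k => ENNReal.ofReal (exp (t * k))), tsum_congr hterm,
    ENNReal.tsum_mul_left, ENNReal.tsum_geometric, ← ENNReal.ofReal_one,
    ← ENNReal.ofReal_sub _ (by positivity), ← ENNReal.ofReal_inv_of_pos (by linarith),
    ← ENNReal.ofReal_mul (by linarith), geometricMgf, div_eq_mul_inv]

theorem lintegral_exp_mul_sub_one_of_measure_ge_eq_pow {X : Ω → ℕ} (hX : Measurable X)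
    (hX1 : ∀ ω, 1 ≤ X ω) {q t : ℝ} (hq0 : 0 ≤ q) (hq1 : q ≤ 1) (hqt : q * exp t < 1)
    (htail : ∀ k : ℕ, 1 ≤ k → μ {ω | k ≤ X ω} = ENNReal.ofReal (q ^ (k - 1))) :
    ∫⁻ ω, ENNReal.ofReal (exp (t * ((X ω : ℝ) - 1))) ∂μ = ENNReal.ofReal (geometricMgf q t) := by
  have hcast : ∀ ω, (X ω : ℝ) - 1 = ((X ω - 1 : ℕ) : ℝ) := fun ω => by
    rw [Nat.cast_sub (hX1 ω), Nat.cast_one]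
  simp_rw [hcast]
  refine lintegral_exp_mul_of_measure_ge_eq_pow (X := fun ω => X ω - 1)
    ((measurable_of_countable (· - 1)).comp hX) hq0 hq1 hqt fun k => ?_
  have hset : {ω | k ≤ X ω - 1} = {ω | k + 1 ≤ X ω} := by
    ext ω; have := hX1 ω; simp only [Set.mem_ofPred_eq]; omega
  rw [hset, htail (k + 1) (Nat.le_add_left 1 k), Nat.add_sub_cancel]

theorem lintegral_exp_mul_of_le_one [IsProbabilityMeasure μ] {X : Ω → ℕ} (hX : Measurable X)
    (hX1 : ∀ ω, X ω ≤ 1) {q : ℝ} (hq0 : 0 ≤ q) (hq1 : q ≤ 1)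
    (hq : μ {ω | X ω = 1} = ENNReal.ofReal (1 - q)) (t : ℝ) :
    ∫⁻ ω, ENNReal.ofReal (exp (t * X ω)) ∂μ = ENNReal.ofReal (bernoulliMgf q t) := by
  have hmeas1 : MeasurableSet {ω | X ω = 1} := hX (measurableSet_singleton 1)
  have hmeas0 : MeasurableSet {ω | X ω = 0} := hX (measurableSet_singleton 0)
  have hcompl : {ω | X ω = 1}ᶜ = {ω | X ω = 0} := by
    ext ω; have := hX1 ω; simp only [Set.mem_compl_iff, Set.mem_ofPred_eq]; omega
  have hq' : μ {ω | X ω = 0} = ENNReal.ofReal q := by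
    rw [← hcompl, prob_compl_eq_one_sub hmeas1, hq, ← ENNReal.ofReal_one,
      ← ENNReal.ofReal_sub _ (by linarith), sub_sub_cancel]
  rw [← lintegral_add_compl _ hmeas1, hcompl,
    setLIntegral_congr_fun hmeas1 (g := fun _ => ENNReal.ofReal (exp t)) (fun ω h => by
      simp [show X ω = 1 from h]),
    setLIntegral_congr_fun hmeas0 (g := fun _ => 1) (fun ω h => by simp [show X ω = 0 from h]),
    setLIntegral_const, setLIntegral_const, hq, hq', one_mul,
    ← ENNReal.ofReal_mul (exp_pos _).le, ← ENNReal.ofReal_add (by positivity) hq0, add_comm,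
    mul_comm, bernoulliMgf]

theorem iIndepFun.measure_ge_sum_le_exp_mul_prod_lintegral {ι : Type*} {X : ι → Ω → ℝ}
    (hX : ∀ i, Measurable (X i)) (hindep : iIndepFun X μ) (s : Finset ι) (a : ℝ) {t : ℝ}
    (ht : 0 ≤ t) :
    μ {ω | a ≤ ∑ i ∈ s, X i ω}
      ≤ ENNReal.ofReal (exp (-(t * a))) * ∏ i ∈ s, ∫⁻ ω, ENNReal.ofReal (exp (t * X i ω)) ∂μ := by
  set V : ι → Ω → ℝ≥0∞ := fun i ω => ENNReal.ofReal (exp (t * X i ω))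
  have hV : ∀ i, Measurable (V i) := fun i => by fun_prop
  have hVindep : iIndepFun V μ :=
    hindep.comp (fun _ x => ENNReal.ofReal (exp (t * x))) fun _ => by fun_prop
  have hf : Measurable fun ω => ENNReal.ofReal (exp (-(t * a))) * ∏ i ∈ s, V i ω := by fun_prop
  have hsub : {ω | a ≤ ∑ i ∈ s, X i ω}
      ⊆ {ω | 1 ≤ ENNReal.ofReal (exp (-(t * a))) * ∏ i ∈ s, V i ω} := by
    intro ω (hω : a ≤ ∑ i ∈ s, X i ω)
    simp only [Set.mem_ofPred_eq, V]
    rw [← ENNReal.ofReal_prod_of_nonneg fun i _ => (exp_pos _).le, ← exp_sum,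
      ← ENNReal.ofReal_mul (exp_pos _).le, ← exp_add, ENNReal.one_le_ofReal, one_le_exp_iff,
      ← Finset.mul_sum]
    nlinarith
  calc μ {ω | a ≤ ∑ i ∈ s, X i ω}
      ≤ ∫⁻ ω, ENNReal.ofReal (exp (-(t * a))) * ∏ i ∈ s, V i ω ∂μ :=
        (measure_mono hsub).trans
          (by simpa using mul_meas_ge_le_lintegral₀ (μ := μ) hf.aemeasurable 1)
    _ = _ := by
        rw [lintegral_const_mul _ (by fun_prop),
          lintegral_prod_eq_prod_lintegral_of_indepFun s V hVindep hV]

end Distribution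

section CatchUp

def catchUpTerm (η : ℝ) : ℕ ⊕ (ℕ ⊕ Unit) → ℕ → ℝ :=
  Sum.elim (fun _ k => (k : ℝ) - 1) (Sum.elim (fun _ k => -η * k) (fun _ k => k))

def catchUpIndex (n : ℕ) : Finset (ℕ ⊕ (ℕ ⊕ Unit)) :=
  (Finset.range n).disjSum ((Finset.range (n - 1)).disjSum {()})

theorem neg_add_sum_catchUpIndex (η : ℝ) (z : ℕ ⊕ (ℕ ⊕ Unit) → ℕ) (n : ℕ) :
    -η + ∑ x ∈ catchUpIndex n, catchUpTerm η x (z x)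
      = ∑ i ∈ Finset.range n, ((z (.inl i) : ℝ) - 1)
        - η * (1 + ∑ i ∈ Finset.range (n - 1), (z (.inr (.inl i)) : ℝ)) + z (.inr (.inr ())) := by
  simp only [catchUpIndex, Finset.sum_disjSum, catchUpTerm, Sum.elim_inl, Sum.elim_inr,
    Finset.sum_singleton, neg_mul, Finset.sum_neg_distrib, ← Finset.mul_sum]
  ring

variable {Ω : Type*} [MeasurableSpace Ω] {μ : Measure Ω} [IsProbabilityMeasure μ]
  {Z : ℕ ⊕ (ℕ ⊕ Unit) → Ω → ℕ}

theorem measure_catchUp_le {β d η t : ℝ} (hβ0 : 0 ≤ β) (hβ1 : β < 1) (hd0 : 0 ≤ d) (hd1 : d < 1)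
    (ht : 0 ≤ t) (hβt : β * exp t < 1) (hdt : d * exp t < 1)
    (hmeas : ∀ x, Measurable (Z x)) (hindep : iIndepFun Z μ)
    (hgeom : ∀ i : ℕ, ∀ k : ℕ, 1 ≤ k →
      μ {ω | k ≤ Z (.inl i) ω} = ENNReal.ofReal (β ^ (k - 1)))
    (hgeom1 : ∀ i : ℕ, ∀ ω, 1 ≤ Z (.inl i) ω)
    (hber : ∀ i : ℕ, μ {ω | Z (.inr (.inl i)) ω = 1} = ENNReal.ofReal (1 - d))
    (hberval : ∀ i : ℕ, ∀ ω, Z (.inr (.inl i)) ω ≤ 1)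
    (hU : ∀ k : ℕ, μ {ω | k ≤ Z (.inr (.inr ())) ω} = ENNReal.ofReal (d ^ k)) {n : ℕ}
    (hn : 1 ≤ n) :
    μ {ω | η ≤ ∑ x ∈ catchUpIndex n, catchUpTerm η x (Z x ω)}
      ≤ ENNReal.ofReal (exp (-(t * η)) * geometricMgf d t / bernoulliMgf d (-η * t)
        * (geometricMgf β t * bernoulliMgf d (-η * t)) ^ n) := by
  set g := geometricMgf β t
  set b := bernoulliMgf d (-η * t)
  set u := geometricMgf d t
  have hg : 0 < g := geometricMgf_pos hβ1 hβt
  have hb : 0 < b := bernoulliMgf_pos hd0 hd1 _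
  have hmgf_geom : ∀ i, ∫⁻ ω, ENNReal.ofReal (exp (t * catchUpTerm η (.inl i) (Z (.inl i) ω))) ∂μ
      = ENNReal.ofReal g :=
    fun i => lintegral_exp_mul_sub_one_of_measure_ge_eq_pow (hmeas _) (hgeom1 i) hβ0 hβ1.le hβt
      (hgeom i)
  have hmgf_ber : ∀ i, ∫⁻ ω, ENNReal.ofReal (exp (t * catchUpTerm η (.inr (.inl i))
      (Z (.inr (.inl i)) ω))) ∂μ = ENNReal.ofReal b := fun i => by
    simp only [catchUpTerm, Sum.elim_inr, Sum.elim_inl, ← mul_assoc, mul_neg, ← neg_mul,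
      mul_comm t η]
    exact lintegral_exp_mul_of_le_one (hmeas _) (hberval i) hd0 hd1.le (hber i) _
  have hmgf_U : ∫⁻ ω, ENNReal.ofReal (exp (t * catchUpTerm η (.inr (.inr ()))
      (Z (.inr (.inr ())) ω))) ∂μ = ENNReal.ofReal u :=
    lintegral_exp_mul_of_measure_ge_eq_pow (hmeas _) hd0 hd1.le hdt hU
  have hfactor : exp (-(t * η)) * u / b * (g * b) ^ n
      = exp (-(t * η)) * (g ^ n * (b ^ (n - 1) * u)) := by
    obtain ⟨m, rfl⟩ := Nat.exists_eq_add_of_le' hn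
    rw [Nat.add_sub_cancel, mul_pow, pow_succ b]
    field_simp
  refine (iIndepFun.measure_ge_sum_le_exp_mul_prod_lintegral
    (X := fun x ω => catchUpTerm η x (Z x ω)) (fun x => (measurable_of_countable _).comp (hmeas x))
    (hindep.comp _ fun _ => measurable_of_countable _) _ η ht).trans_eq ?_
  simp only [catchUpIndex, Finset.prod_disjSum, hmgf_geom, hmgf_ber, hmgf_U, Finset.prod_const,
    Finset.card_range, Finset.card_singleton, pow_one]
  rw [hfactor, ENNReal.ofReal_mul (exp_pos _).le, ENNReal.ofReal_mul (by positivity),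
    ENNReal.ofReal_mul (by positivity), ENNReal.ofReal_pow hg.le, ENNReal.ofReal_pow hb.le]

theorem measure_catchUp_lt_one {η : ℝ} (hη : 0 < η) (hmeas : ∀ x, Measurable (Z x))
    (hindep : iIndepFun Z μ) (hgeom_one : ∀ i, μ {ω | Z (.inl i) ω = 1} ≠ 0)
    (hU_zero : μ {ω | Z (.inr (.inr ())) ω = 0} ≠ 0) (n : ℕ) :
    μ {ω | η ≤ ∑ x ∈ catchUpIndex n, catchUpTerm η x (Z x ω)} < 1 := by
  set S : ℕ ⊕ (ℕ ⊕ Unit) → Set ℕ :=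
    Sum.elim (fun _ => {1}) (Sum.elim (fun _ => Set.univ) (fun _ => {0}))
  set G := ⋂ x ∈ catchUpIndex n, Z x ⁻¹' S x
  have hG : μ G ≠ 0 := by
    rw [hindep.measure_inter_preimage_eq_mul _ fun x _ => MeasurableSet.of_discrete,
      Finset.prod_ne_zero_iff]
    rintro (i | i | ⟨⟩) -
    · exact hgeom_one i
    · simp [S]
    · exact hU_zero
  have hsub : {ω | η ≤ ∑ x ∈ catchUpIndex n, catchUpTerm η x (Z x ω)} ⊆ Gᶜ := by
    intro ω (hω : η ≤ _) hωG
    simp only [G, Set.mem_iInter, Set.mem_preimage] at hωG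
    have hterm : ∀ x ∈ catchUpIndex n, catchUpTerm η x (Z x ω) ≤ 0 := by
      rintro (i | i | ⟨⟩) hx <;> have := hωG _ hx <;> simp_all [S, catchUpTerm]
    exact (Finset.sum_nonpos hterm).not_gt (hη.trans_le hω)
  calc μ {ω | η ≤ ∑ x ∈ catchUpIndex n, catchUpTerm η x (Z x ω)} ≤ μ Gᶜ := measure_mono hsub
    _ = 1 - μ G := prob_compl_eq_one_sub
      (.biInter (Finset.countable_toSet _) fun x _ => hmeas x .of_discrete)
    _ < 1 := ENNReal.sub_lt_self ENNReal.one_ne_top one_ne_zero hG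

end CatchUp

theorem stmt_6 {Ω : Type*} [MeasurableSpace Ω] (μ : Measure Ω) [IsProbabilityMeasure μ]
    (β d η : ℝ) (hβ0 : 0 < β) (hβ1 : β < 1) (hd0 : 0 ≤ d) (hd1 : d < 1)
    (hη : η ∈ Set.Ioc (0 : ℝ) 1) (hadv : β / (1 - β) < η * (1 - d))
    -- the family: `Sum.inl i` are the geometric variables `Geom_i (1-β)`,
    -- `Sum.inr (Sum.inl i)` are the Bernoulli variables `Be_i (1-d)`,
    -- and `Sum.inr (Sum.inr ())` is the geometric variable underlying `U`.
    (Z : (ℕ ⊕ (ℕ ⊕ Unit)) → Ω → ℕ) (hmeas : ∀ x, Measurable (Z x))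
    (hindep : iIndepFun Z μ)
    (hgeom : ∀ i : ℕ, ∀ k : ℕ, 1 ≤ k →
      μ {ω | k ≤ Z (Sum.inl i) ω} = ENNReal.ofReal (β ^ (k - 1)))
    (hgeom1 : ∀ i : ℕ, ∀ ω, 1 ≤ Z (Sum.inl i) ω)
    (hber : ∀ i : ℕ, μ {ω | Z (Sum.inr (Sum.inl i)) ω = 1} = ENNReal.ofReal (1 - d))
    (hberval : ∀ i : ℕ, ∀ ω, Z (Sum.inr (Sum.inl i)) ω ≤ 1)
    (hU : ∀ k : ℕ, μ {ω | k ≤ Z (Sum.inr (Sum.inr ())) ω} = ENNReal.ofReal (d ^ k))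
    (A F : ℕ → Ω → ℝ) (U : Ω → ℝ)
    (hA : ∀ n ω, A n ω = ∑ i ∈ Finset.range n, ((Z (Sum.inl i) ω : ℝ) - 1))
    (hF : ∀ n ω, F n ω = 1 + ∑ i ∈ Finset.range (n - 1), (Z (Sum.inr (Sum.inl i)) ω : ℝ))
    (hUdef : ∀ ω, U ω = (Z (Sum.inr (Sum.inr ())) ω : ℝ)) :
    ∃ c : ℝ, 0 < c ∧ ∀ n : ℕ, 1 ≤ n →
      μ {ω | η * F n ω - U ω ≤ A n ω} ≤ ENNReal.ofReal (Real.exp (-c * n)) := by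
  have hexp : ∀ q : ℝ, q < 1 → ∀ᶠ t in 𝓝[>] 0, q * exp t < 1 := fun q hq =>
    nhdsWithin_le_nhds ((continuous_const.mul continuous_exp).continuousAt.eventually_lt
      continuousAt_const (by simpa using hq))
  obtain ⟨t, ht, hβt, hdt, hgb⟩ := (eventually_mem_nhdsWithin.and ((hexp β hβ1).and
    ((hexp d hd1).and (eventually_geometricMgf_mul_bernoulliMgf_lt_one hβ1 hadv)))).exists
  have hevent : ∀ n, {ω | η * F n ω - U ω ≤ A n ω}
      = {ω | η ≤ ∑ x ∈ catchUpIndex n, catchUpTerm η x (Z x ω)} := fun n => by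
    ext ω
    have := neg_add_sum_catchUpIndex η (Z · ω) n
    simp only [Set.mem_ofPred_eq, hA, hF, hUdef]
    constructor <;> intro <;> linarith
  have hgeom_one : ∀ i, μ {ω | Z (.inl i) ω = 1} ≠ 0 := fun i => by
    rw [measure_eq_of_measure_ge (hmeas _) (by positivity) (hgeom i 1 le_rfl)
      (hgeom i 2 one_le_two)]
    simpa using hβ1
  have hU_zero : μ {ω | Z (.inr (.inr ())) ω = 0} ≠ 0 := by
    rw [measure_eq_of_measure_ge (hmeas _) (by positivity) (hU 0) (hU 1)]
    simpa using hd1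
  simp_rw [hevent]
  exact exists_pos_forall_le_ofReal_exp
    (mul_pos (geometricMgf_pos hβ1 hβt) (bernoulliMgf_pos hd0 hd1 _)) hgb
    (fun n _ => measure_catchUp_lt_one hη.1 hmeas hindep hgeom_one hU_zero n)
    (fun n hn => measure_catchUp_le hβ0.le hβ1 hd0 hd1 ht.le hβt hdt hmeas hindep hgeom hgeom1
      hber hberval hU hn)
end

section
/- Let $(X_i)_{i\geq1}$ be i.i.d. real-valued random variables with $E[X_1] < 0$ and $E[e^{\theta_0 X_1}] < \infty$ for some $\theta_0 > 0$. Then there exists $\theta^* > 0$ with $E[e^{\theta^* X_1}] \leq 1$, and for partial sums $S_m = \sum_{i=1}^m X_i$ (with $S_0 = 0$) and any $c > 0$: $P\left(\sup_{m \geq 0} S_m \geq c\right) \leq e^{-\theta^* c}$. -/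
/-!
The mean is the right derivative at `0` of `M θ = E[exp (θ X)]`: by dominated convergence, since
the difference quotients `(exp (θ x) - 1) / θ` lie between `x` and their value at `θ₀`. Hence
`M θ < M 0 = 1` for some small `θ > 0`. For such `θ`, `exp (θ S n)` is a nonnegative
supermartingale; stopped when `S` first reaches `c`, its expectation stays `≤ 1`, which gives
`exp (θ c) P(max_{k ≤ n} S k ≥ c) ≤ 1`, and `n → ∞` finishes.
-/

open MeasureTheory ProbabilityTheory Real Filter Topology Finset

section RightDerivativeOfMgf

variable {Ω : Type*} [MeasurableSpace Ω] {μ : Measure Ω} {Y : Ω → ℝ}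

lemma convexOn_exp_mul_const (y : ℝ) : ConvexOn ℝ Set.univ (fun t : ℝ => exp (t * y)) := by
  simpa [Function.comp_def, mul_comm] using convexOn_exp.comp_linearMap (LinearMap.mul ℝ ℝ y)

lemma le_slope_exp_mul (y : ℝ) {t : ℝ} (ht : 0 < t) :
    y ≤ slope (fun s => exp (s * y)) 0 t := by
  rw [slope_def_field, zero_mul, exp_zero, sub_zero, le_div_iff₀ ht]
  linarith [add_one_le_exp (t * y)]

lemma slope_exp_mul_mono (y : ℝ) {t t' : ℝ} (ht : 0 < t) (htt' : t ≤ t') :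
    slope (fun s => exp (s * y)) 0 t ≤ slope (fun s => exp (s * y)) 0 t' := by
  simp only [slope_def_field]
  exact (convexOn_exp_mul_const y).secant_mono (Set.mem_univ _) (Set.mem_univ _) (Set.mem_univ _)
    ht.ne' (ht.trans_le htt').ne' htt'

lemma tendsto_slope_mgf_zero [IsFiniteMeasure μ] (hY : Integrable Y μ) {θ₀ : ℝ} (hθ₀ : 0 < θ₀)
    (hexp : Integrable (fun ω => exp (θ₀ * Y ω)) μ) :
    Tendsto (slope (mgf Y μ) 0) (𝓝[>] 0) (𝓝 μ[Y]) := by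
  set F : ℝ → Ω → ℝ := fun t ω => slope (fun s => exp (s * Y ω)) 0 t
  have hexp_of_mem : ∀ t ∈ Set.Icc 0 θ₀, Integrable (fun ω => exp (t * Y ω)) μ := fun t ht =>
    integrable_exp_mul_of_le_of_le (by simp) hexp ht.1 ht.2
  have hF_int : ∀ t ∈ Set.Icc 0 θ₀, Integrable (F t) μ := fun t ht => by
    simp only [F, slope_def_field, zero_mul, exp_zero, sub_zero]
    exact ((hexp_of_mem t ht).sub (integrable_const _)).div_const _
  have hF_eq : ∀ t ∈ Set.Icc 0 θ₀, μ[F t] = slope (mgf Y μ) 0 t := fun t ht => by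
    simp only [F, slope_def_field, mgf, zero_mul, exp_zero, sub_zero, integral_div,
      integral_sub (hexp_of_mem t ht) (integrable_const _), integral_const, smul_eq_mul, mul_one]
  have hlim : Tendsto (fun t => μ[F t]) (𝓝[>] 0) (𝓝 μ[Y]) := by
    refine tendsto_integral_filter_of_dominated_convergence (fun ω => |Y ω| + |F θ₀ ω|) ?_ ?_
      (hY.abs.add (hF_int θ₀ ⟨hθ₀.le, le_rfl⟩).abs) ?_
    · filter_upwards [Ioo_mem_nhdsGT hθ₀] with t ht
      exact (hF_int t ⟨ht.1.le, ht.2.le⟩).aestronglyMeasurable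
    · filter_upwards [Ioo_mem_nhdsGT hθ₀] with t ht
      refine ae_of_all _ fun ω => abs_le.2 ⟨?_, ?_⟩
      · linarith [le_slope_exp_mul (Y ω) ht.1, neg_abs_le (Y ω), abs_nonneg (F θ₀ ω)]
      · linarith [slope_exp_mul_mono (Y ω) ht.1 ht.2.le, le_abs_self (F θ₀ ω), abs_nonneg (Y ω)]
    · refine ae_of_all _ fun ω => ?_
      have hderiv : HasDerivAt (fun s => exp (s * Y ω)) (Y ω) 0 := by
        simpa using ((hasDerivAt_mul_const (Y ω)).exp : HasDerivAt _ _ (0 : ℝ))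
      exact (hasDerivAt_iff_tendsto_slope.1 hderiv).mono_left (nhdsGT_le_nhdsNE 0)
  refine hlim.congr' ?_
  filter_upwards [Ioo_mem_nhdsGT hθ₀] with t ht
  exact hF_eq t ⟨ht.1.le, ht.2.le⟩

lemma exists_mgf_lt_one [IsProbabilityMeasure μ] (hY : Integrable Y μ) (hmean : μ[Y] < 0)
    {θ₀ : ℝ} (hθ₀ : 0 < θ₀) (hexp : Integrable (fun ω => exp (θ₀ * Y ω)) μ) :
    ∃ θ ∈ Set.Ioo 0 θ₀, mgf Y μ θ < 1 := by
  obtain ⟨θ, hslope, hθ⟩ := (((tendsto_slope_mgf_zero hY hθ₀ hexp).eventually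
    (gt_mem_nhds hmean)).and (Ioo_mem_nhdsGT hθ₀)).exists
  refine ⟨θ, hθ, ?_⟩
  rw [slope_def_field, mgf_zero, sub_zero] at hslope
  by_contra! h
  exact (div_nonneg (sub_nonneg.2 h) hθ.1.le).not_gt hslope

end RightDerivativeOfMgf

section ExponentialBound

variable {Ω : Type*} {X : ℕ → Ω → ℝ}

abbrev pastMeasurableSpace (X : ℕ → Ω → ℝ) (n : ℕ) : MeasurableSpace Ω :=
  ⨆ i ∈ Set.Iio n, MeasurableSpace.comap (X i) Real.measurableSpace

lemma measurable_sum_range_of_le (k : ℕ) {n : ℕ} (hkn : k ≤ n) :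
    Measurable[pastMeasurableSpace X n] (fun ω => ∑ i ∈ range k, X i ω) :=
  Finset.measurable_sum _ fun i hi => (comap_measurable (X i)).mono
    (le_iSup₂ (f := fun j (_ : j ∈ Set.Iio n) => MeasurableSpace.comap (X j) _) i
      ((mem_range.1 hi).trans_le hkn)) le_rfl

lemma measurableSet_forall_sum_range_lt (c : ℝ) (n : ℕ) :
    MeasurableSet[pastMeasurableSpace X n] {ω | ∀ k ≤ n, ∑ i ∈ range k, X i ω < c} := by
  simp only [Set.ofPred_forall]
  exact .iInter fun k => .iInter fun hk =>
    measurableSet_lt (measurable_sum_range_of_le k hk) measurable_const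

variable [MeasurableSpace Ω] {μ : Measure Ω}

lemma setLIntegral_exp_sum_range_succ_le (hmeas : ∀ i, Measurable (X i)) (hindep : iIndepFun X μ)
    {θ : ℝ} {n : ℕ} (hmgf : ∫⁻ ω, ENNReal.ofReal (exp (θ * X n ω)) ∂μ ≤ 1) {B : Set Ω}
    (hB : MeasurableSet[pastMeasurableSpace X n] B) :
    ∫⁻ ω in B, ENNReal.ofReal (exp (θ * ∑ i ∈ range (n + 1), X i ω)) ∂μ ≤
      ∫⁻ ω in B, ENNReal.ofReal (exp (θ * ∑ i ∈ range n, X i ω)) ∂μ := by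
  have hle : ∀ i, MeasurableSpace.comap (X i) Real.measurableSpace ≤ ‹_› :=
    fun i => (hmeas i).comap_le
  have hpast_le := iSup₂_le fun i (_ : i ∈ Set.Iio n) => hle i
  have hnext_le := iSup₂_le fun i (_ : i ∈ ({n} : Set ℕ)) => hle i
  have hindep_next := indep_iSup_of_disjoint hle ((iIndepFun_iff_iIndep _ _ _).1 hindep)
    (S := Set.Iio n) (T := {n}) (by simp)
  have hB' : MeasurableSet B := hpast_le _ hB
  set f : Ω → ENNReal := B.indicator fun ω => ENNReal.ofReal (exp (θ * ∑ i ∈ range n, X i ω))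
  have hf : Measurable[pastMeasurableSpace X n] f :=
    (((measurable_sum_range_of_le n le_rfl).const_mul θ).exp.ennreal_ofReal).indicator hB
  have hg : Measurable[⨆ i ∈ ({n} : Set ℕ), MeasurableSpace.comap (X i) Real.measurableSpace]
      fun ω => ENNReal.ofReal (exp (θ * X n ω)) :=
    ((((comap_measurable (X n)).mono (le_iSup₂ (f := fun j (_ : j ∈ ({n} : Set ℕ)) =>
      MeasurableSpace.comap (X j) _) n rfl) le_rfl).const_mul θ).exp.ennreal_ofReal)
  calc ∫⁻ ω in B, ENNReal.ofReal (exp (θ * ∑ i ∈ range (n + 1), X i ω)) ∂μ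
      = ∫⁻ ω, f ω * ENNReal.ofReal (exp (θ * X n ω)) ∂μ := by
        rw [← lintegral_indicator hB']
        refine lintegral_congr fun ω => ?_
        by_cases hω : ω ∈ B
        · simp [f, hω, sum_range_succ, mul_add, exp_add, ENNReal.ofReal_mul (exp_pos _).le]
        · simp [f, hω]
    _ = (∫⁻ ω, f ω ∂μ) * ∫⁻ ω, ENNReal.ofReal (exp (θ * X n ω)) ∂μ :=
        lintegral_mul_eq_lintegral_mul_lintegral_of_independent_measurableSpace hpast_le hnext_le
          hindep_next hf hg
    _ ≤ ∫⁻ ω, f ω ∂μ := mul_le_of_le_one_right' hmgf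
    _ = ∫⁻ ω in B, ENNReal.ofReal (exp (θ * ∑ i ∈ range n, X i ω)) ∂μ := lintegral_indicator hB' _

-- The left side bounds `E[exp (θ S (min n τ))]` from below, where `τ` is the first time at which
-- `S` reaches `c`.
lemma ofReal_exp_mul_measure_add_setLIntegral_le_one [IsProbabilityMeasure μ]
    (hmeas : ∀ i, Measurable (X i)) (hindep : iIndepFun X μ) {θ : ℝ} (hθ : 0 ≤ θ)
    (hmgf : ∀ i, ∫⁻ ω, ENNReal.ofReal (exp (θ * X i ω)) ∂μ ≤ 1) (c : ℝ) (n : ℕ) :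
    ENNReal.ofReal (exp (θ * c)) * μ {ω | ∃ k ≤ n, c ≤ ∑ i ∈ range k, X i ω} +
      ∫⁻ ω in {ω | ∀ k ≤ n, ∑ i ∈ range k, X i ω < c},
        ENNReal.ofReal (exp (θ * ∑ i ∈ range n, X i ω)) ∂μ ≤ 1 := by
  induction n with
  | zero =>
    rcases le_or_gt c 0 with hc | hc
    · simpa [hc, hc.not_gt] using exp_le_one_iff.2 (mul_nonpos_of_nonneg_of_nonpos hθ hc)
    · simp [hc, hc.not_ge]
  | succ n ih =>
    set S : ℕ → Ω → ℝ := fun k ω => ∑ i ∈ range k, X i ω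
    -- the partial sums reach `c` for the first time at `n + 1`
    set D := {ω | ∀ k ≤ n, S k ω < c} ∩ {ω | c ≤ S (n + 1) ω}
    have hpast_le : pastMeasurableSpace X n ≤ ‹_› :=
      iSup₂_le fun i _ => (hmeas i).comap_le
    have hB := measurableSet_forall_sum_range_lt (X := X) c n
    have hD : MeasurableSet D := (hpast_le _ hB).inter
      (measurableSet_le measurable_const (Finset.measurable_sum _ fun i _ => hmeas i))
    have hC_succ : {ω | ∃ k ≤ n + 1, c ≤ S k ω} = {ω | ∃ k ≤ n, c ≤ S k ω} ∪ D := by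
      ext ω
      simp only [D, Set.mem_union, Set.mem_inter_iff, Set.mem_ofPred_eq]
      grind
    have hB_succ : {ω | ∀ k ≤ n, S k ω < c} = {ω | ∀ k ≤ n + 1, S k ω < c} ∪ D := by
      ext ω
      simp only [D, Set.mem_union, Set.mem_inter_iff, Set.mem_ofPred_eq]
      grind
    have hC_disj : Disjoint {ω | ∃ k ≤ n, c ≤ S k ω} D :=
      Set.disjoint_left.2 fun ω ⟨k, hk, hck⟩ hω => (hω.1 k hk).not_ge hck
    have hB_disj : Disjoint {ω | ∀ k ≤ n + 1, S k ω < c} D :=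
      Set.disjoint_left.2 fun ω hω hωD => (hω (n + 1) le_rfl).not_ge hωD.2
    have hD_le : ENNReal.ofReal (exp (θ * c)) * μ D ≤
        ∫⁻ ω in D, ENNReal.ofReal (exp (θ * S (n + 1) ω)) ∂μ := by
      rw [← setLIntegral_const]
      exact setLIntegral_mono' hD fun ω hω => ENNReal.ofReal_le_ofReal
        (exp_le_exp.2 (mul_le_mul_of_nonneg_left hω.2 hθ))
    calc ENNReal.ofReal (exp (θ * c)) * μ {ω | ∃ k ≤ n + 1, c ≤ S k ω} +
          ∫⁻ ω in {ω | ∀ k ≤ n + 1, S k ω < c}, ENNReal.ofReal (exp (θ * S (n + 1) ω)) ∂μ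
        = ENNReal.ofReal (exp (θ * c)) * μ {ω | ∃ k ≤ n, c ≤ S k ω} +
          (∫⁻ ω in {ω | ∀ k ≤ n + 1, S k ω < c}, ENNReal.ofReal (exp (θ * S (n + 1) ω)) ∂μ +
            ENNReal.ofReal (exp (θ * c)) * μ D) := by
          rw [hC_succ, measure_union hC_disj hD, mul_add]
          ring
      _ ≤ ENNReal.ofReal (exp (θ * c)) * μ {ω | ∃ k ≤ n, c ≤ S k ω} +
          ∫⁻ ω in {ω | ∀ k ≤ n, S k ω < c}, ENNReal.ofReal (exp (θ * S (n + 1) ω)) ∂μ := by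
          rw [hB_succ, lintegral_union hD hB_disj]
          gcongr
      _ ≤ ENNReal.ofReal (exp (θ * c)) * μ {ω | ∃ k ≤ n, c ≤ S k ω} +
          ∫⁻ ω in {ω | ∀ k ≤ n, S k ω < c}, ENNReal.ofReal (exp (θ * S n ω)) ∂μ :=
          add_le_add le_rfl (setLIntegral_exp_sum_range_succ_le hmeas hindep (hmgf n) hB)
      _ ≤ 1 := ih

theorem measure_exists_sum_range_ge_le [IsProbabilityMeasure μ]
    (hmeas : ∀ i, Measurable (X i)) (hindep : iIndepFun X μ) {θ : ℝ} (hθ : 0 ≤ θ)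
    (hmgf : ∀ i, ∫⁻ ω, ENNReal.ofReal (exp (θ * X i ω)) ∂μ ≤ 1) (c : ℝ) :
    μ {ω | ∃ m, c ≤ ∑ i ∈ range m, X i ω} ≤ ENNReal.ofReal (exp (-θ * c)) := by
  have hunion : {ω | ∃ m, c ≤ ∑ i ∈ range m, X i ω} =
      ⋃ n, {ω | ∃ k ≤ n, c ≤ ∑ i ∈ range k, X i ω} := by
    ext ω
    simp only [Set.mem_ofPred_eq, Set.mem_iUnion]
    exact ⟨fun ⟨m, hm⟩ => ⟨m, m, le_rfl, hm⟩, fun ⟨_, k, _, hk⟩ => ⟨k, hk⟩⟩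
  have hmono : Monotone fun n => {ω | ∃ k ≤ n, c ≤ ∑ i ∈ range k, X i ω} :=
    fun _ _ hnn' _ ⟨k, hk, hck⟩ => ⟨k, hk.trans hnn', hck⟩
  rw [hunion, hmono.measure_iUnion, neg_mul, exp_neg, ENNReal.ofReal_inv_of_pos (exp_pos _)]
  refine iSup_le fun n => ENNReal.le_inv_iff_mul_le.2 ?_
  rw [mul_comm]
  exact le_self_add.trans (ofReal_exp_mul_measure_add_setLIntegral_le_one hmeas hindep hθ hmgf c n)

end ExponentialBound

theorem stmt_7 {Ω : Type*} [MeasurableSpace Ω] (μ : Measure Ω) [IsProbabilityMeasure μ]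
    (X : ℕ → Ω → ℝ) (hmeas : ∀ i, Measurable (X i))
    (hindep : iIndepFun X μ)
    (hident : ∀ i, IdentDistrib (X i) (X 0) μ μ)
    (hint : Integrable (X 0) μ)
    (hmean : ∫ ω, X 0 ω ∂μ < 0)
    (hmgf : ∃ θ₀ : ℝ, 0 < θ₀ ∧ Integrable (fun ω => Real.exp (θ₀ * X 0 ω)) μ) :
    ∃ θstar : ℝ, 0 < θstar ∧ (∫ ω, Real.exp (θstar * X 0 ω) ∂μ) ≤ 1 ∧
      ∀ c : ℝ, 0 < c →
        μ {ω | ∃ m : ℕ, c ≤ ∑ i ∈ Finset.range m, X i ω} ≤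
          ENNReal.ofReal (Real.exp (-θstar * c)) := by
  obtain ⟨θ₀, hθ₀, hexp⟩ := hmgf
  obtain ⟨θ, hθ, hmgf_lt⟩ := exists_mgf_lt_one hint hmean hθ₀ hexp
  have hexpθ : Integrable (fun ω => exp (θ * X 0 ω)) μ :=
    integrable_exp_mul_of_le_of_le (by simp) hexp hθ.1.le hθ.2.le
  have hlintegral : ∀ i, ∫⁻ ω, ENNReal.ofReal (exp (θ * X i ω)) ∂μ ≤ 1 := fun i => calc
    ∫⁻ ω, ENNReal.ofReal (exp (θ * X i ω)) ∂μ = ∫⁻ ω, ENNReal.ofReal (exp (θ * X 0 ω)) ∂μ :=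
      ((hident i).comp (u := fun x => ENNReal.ofReal (exp (θ * x))) (by fun_prop)).lintegral_eq
    _ = ENNReal.ofReal (mgf (X 0) μ θ) :=
      (ofReal_integral_eq_lintegral_ofReal hexpθ (ae_of_all _ fun ω => (exp_pos _).le)).symm
    _ ≤ 1 := ENNReal.ofReal_le_one.2 hmgf_lt.le
  exact ⟨θ, hθ.1, hmgf_lt.le,
    fun c _ => measure_exists_sum_range_ge_le hmeas hindep hθ.1.le hlintegral c⟩
end
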